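/- Let T : Ω → Ω* be the gradient of a C² strictly convex function pushing density f forward to density g with quadratic cost c(x,y) = |x−y|²/2. Then for any other C¹ measure-preserving map S : Ω → Ω* (pushing f to g), the transport cost satisfies ∫_Ω |x − T(x)|²/2 · f(x)dx ≤ ∫_Ω |x − S(x)|²/2 · f(x)dx. -/
import Mathlib

open MeasureTheory

open scoped RealInnerProductSpace

/-- Subgradient inequality: a convex differentiable function lies above its tangent plane. -/
lemma brenier_aux_subgrad {H : Type*} [NormedAddCommGroup H] [InnerProductSpace ℝ H]
    {s : Set H} {u : H → ℝ} (hc : ConvexOn ℝ s u) {x z : H} (hx : x ∈ s) (hz : z ∈ s)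
    {D : H →L[ℝ] ℝ} (hD : HasFDerivAt u D x) : u x + D (z - x) ≤ u z := by
  rcases eq_or_ne z x with rfl | hne
  · simp
  · set g : ℝ →ᵃ[ℝ] H := AffineMap.lineMap x z with hg
    have hconv : ConvexOn ℝ (⇑g ⁻¹' s) (u ∘ ⇑g) := hc.comp_affineMap g
    have hg0 : g 0 = x := AffineMap.lineMap_apply_zero x z
    have hg1 : g 1 = z := AffineMap.lineMap_apply_one x z
    have h0 : (0 : ℝ) ∈ ⇑g ⁻¹' s := by simp [Set.mem_preimage, hg0, hx]
    have h1 : (1 : ℝ) ∈ ⇑g ⁻¹' s := by simp [Set.mem_preimage, hg1, hz]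
    have hline : HasDerivAt (fun t : ℝ => g t) (z - x) 0 := by
      have : HasDerivAt (fun t : ℝ => t • (z - x) + x) ((1 : ℝ) • (z - x)) 0 :=
        ((hasDerivAt_id (0 : ℝ)).smul_const (z - x)).add_const x
      simp only [one_smul] at this
      refine this.congr_deriv rfl |>.congr_of_eventuallyEq ?_
      · filter_upwards with t
        rw [hg, AffineMap.lineMap_apply_module']
    have hder : HasDerivAt (u ∘ ⇑g) (D (z - x)) 0 := by
      have : HasFDerivAt u D (g 0) := by rw [hg0]; exact hD
      exact this.comp_hasDerivAt 0 hline
    have hslope := hconv.le_slope_of_hasDerivAt h0 h1 one_pos hder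
    rw [slope_def_field] at hslope
    simp only [Function.comp_apply, hg0, hg1] at hslope
    have : D (z - x) ≤ (u z - u x) / (1 - 0) := hslope
    rw [sub_zero, div_one] at this
    linarith

/-- Optimality direction of Brenier's theorem: the gradient `T = ∇u` of a C² strictly
convex function pushing `f(x)dx` forward to `g(y)dy` minimizes the quadratic transport
cost among all C¹ measure-preserving maps `S`. -/
theorem brenier_gradient_optimal {n : ℕ}
    (Ω Ωs : Set (EuclideanSpace ℝ (Fin n)))
    (hΩ : IsOpen Ω) (hΩs : IsOpen Ωs)
    (hΩb : Bornology.IsBounded Ω) (hΩsb : Bornology.IsBounded Ωs)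
    (f g : EuclideanSpace ℝ (Fin n) → ℝ)
    (hfpos : ∀ x ∈ Ω, 0 < f x) (hgpos : ∀ y ∈ Ωs, 0 < g y)
    (hfint : IntegrableOn f Ω) (hgint : IntegrableOn g Ωs)
    (u : EuclideanSpace ℝ (Fin n) → ℝ)
    (hu : ContDiffOn ℝ 2 u Ω) (huconv : StrictConvexOn ℝ Ω u)
    (T : EuclideanSpace ℝ (Fin n) → EuclideanSpace ℝ (Fin n))
    (hT : ∀ x ∈ Ω, T x = gradient u x) (hTmap : Set.MapsTo T Ω Ωs)
    (hTpush : Measure.map T ((volume.restrict Ω).withDensity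
        (fun x => ENNReal.ofReal (f x))) =
      (volume.restrict Ωs).withDensity (fun y => ENNReal.ofReal (g y)))
    (S : EuclideanSpace ℝ (Fin n) → EuclideanSpace ℝ (Fin n))
    (hS : ContDiffOn ℝ 1 S Ω) (hSmap : Set.MapsTo S Ω Ωs)
    (hSpush : Measure.map S ((volume.restrict Ω).withDensity
        (fun x => ENNReal.ofReal (f x))) =
      (volume.restrict Ωs).withDensity (fun y => ENNReal.ofReal (g y))) :
    ∫ x in Ω, ‖x - T x‖ ^ 2 / 2 * f x ≤ ∫ x in Ω, ‖x - S x‖ ^ 2 / 2 * f x := by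
  classical
  rcases Set.eq_empty_or_nonempty Ω with hΩe | ⟨x0, hx0⟩
  · simp [hΩe]
  have hΩm : MeasurableSet Ω := hΩ.measurableSet
  have hconvOn : ConvexOn ℝ Ω u := huconv.convexOn
  have hdiff : ∀ x ∈ Ω, HasFDerivAt u (fderiv ℝ u x) x := fun x hx =>
    (((hu.contDiffAt (hΩ.mem_nhds hx)).differentiableAt (by norm_num))).hasFDerivAt
  have hTx : ∀ x ∈ Ω, ∀ v, ⟪T x, v⟫ = fderiv ℝ u x v := by
    intro x hx v
    rw [hT x hx]
    exact InnerProductSpace.toDual_symm_apply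
  have hsub : ∀ x ∈ Ω, ∀ z ∈ Ω, u x + ⟪T x, z - x⟫ ≤ u z := by
    intro x hx z hz
    rw [hTx x hx]
    exact brenier_aux_subgrad hconvOn hx hz (hdiff x hx)
  -- bounds on Ω and Ωs
  obtain ⟨RΩ, hRΩ⟩ := hΩb.subset_closedBall 0
  obtain ⟨RΩs, hRΩs⟩ := hΩsb.subset_closedBall 0
  have hnx : ∀ x ∈ Ω, ‖x‖ ≤ RΩ := fun x hx => mem_closedBall_zero_iff.mp (hRΩ hx)
  have hny : ∀ y ∈ Ωs, ‖y‖ ≤ RΩs := fun y hy => mem_closedBall_zero_iff.mp (hRΩs hy)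
  have hRΩ0 : 0 ≤ RΩ := le_trans (norm_nonneg x0) (hnx x0 hx0)
  have hRΩs0 : 0 ≤ RΩs := le_trans (norm_nonneg (T x0)) (hny _ (hTmap hx0))
  -- lower bound on u
  have hm : ∀ z ∈ Ω, u x0 - ‖T x0‖ * (2 * RΩ) ≤ u z := by
    intro z hz
    have h1 := hsub x0 hx0 z hz
    have h2 : |⟪T x0, z - x0⟫| ≤ ‖T x0‖ * ‖z - x0‖ := abs_real_inner_le_norm _ _
    have h3 : ‖z - x0‖ ≤ 2 * RΩ := by
      have := norm_sub_le z x0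
      have := hnx z hz
      have := hnx x0 hx0
      linarith
    have h4 := abs_le.mp h2
    nlinarith [norm_nonneg (T x0), norm_nonneg (z - x0)]
  -- the Legendre-type transform
  set U : EuclideanSpace ℝ (Fin n) → ℝ :=
    fun y => sSup ((fun z => ⟪z, y⟫ - u z) '' Ω) with hUdef
  have hUbdd : ∀ y, BddAbove ((fun z => ⟪z, y⟫ - u z) '' Ω) := by
    intro y
    refine ⟨RΩ * ‖y‖ - (u x0 - ‖T x0‖ * (2 * RΩ)), ?_⟩
    rintro _ ⟨z, hz, rfl⟩
    simp only
    have h1 : ⟪z, y⟫ ≤ ‖z‖ * ‖y‖ := real_inner_le_norm _ _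
    have h2 := hnx z hz
    have h3 := hm z hz
    nlinarith [norm_nonneg y, norm_nonneg z]
  have hUne : ∀ y : EuclideanSpace ℝ (Fin n),
      ((fun z => ⟪z, y⟫ - u z) '' Ω).Nonempty :=
    fun y => ⟨_, Set.mem_image_of_mem _ hx0⟩
  have hUle : ∀ x ∈ Ω, ∀ y, ⟪x, y⟫ - u x ≤ U y :=
    fun x hx y => le_csSup (hUbdd y) ⟨x, hx, rfl⟩
  have hUT : ∀ x ∈ Ω, U (T x) ≤ ⟪x, T x⟫ - u x := by
    intro x hx
    refine csSup_le (hUne _) ?_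
    rintro _ ⟨z, hz, rfl⟩
    simp only
    have h1 := hsub x hx z hz
    rw [inner_sub_right] at h1
    have e1 := real_inner_comm z (T x)
    have e2 := real_inner_comm x (T x)
    linarith
  have hUlip : ∀ y1 y2, U y1 ≤ U y2 + RΩ * ‖y1 - y2‖ := by
    intro y1 y2
    refine csSup_le (hUne _) ?_
    rintro _ ⟨z, hz, rfl⟩
    simp only
    have h1 : ⟪z, y1⟫ - u z = (⟪z, y2⟫ - u z) + ⟪z, y1 - y2⟫ := by
      rw [inner_sub_right]; ring
    have h2 := hUle z hz y2
    have h3 : ⟪z, y1 - y2⟫ ≤ ‖z‖ * ‖y1 - y2‖ := real_inner_le_norm _ _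
    have h4 := hnx z hz
    nlinarith [norm_nonneg (y1 - y2)]
  have hUcont : Continuous U := by
    have : LipschitzWith (Real.toNNReal RΩ) U := by
      refine LipschitzWith.of_dist_le_mul fun y1 y2 => ?_
      rw [Real.dist_eq, Real.coe_toNNReal _ hRΩ0, dist_eq_norm, abs_le]
      constructor
      · have := hUlip y2 y1
        rw [norm_sub_rev] at this
        linarith
      · have := hUlip y1 y2
        linarith
    exact this.continuous
  have hUb : ∀ y, ‖y‖ ≤ RΩs → ‖U y‖ ≤ |U 0| + RΩ * RΩs := by
    intro y hy
    have l1 := hUlip y 0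
    have l2 := hUlip 0 y
    rw [sub_zero] at l1
    rw [zero_sub, norm_neg] at l2
    rw [Real.norm_eq_abs, abs_le]
    constructor
    · nlinarith [neg_abs_le (U 0), norm_nonneg y]
    · nlinarith [le_abs_self (U 0), norm_nonneg y]
  -- measure-theoretic setup
  set μ := (volume.restrict Ω).withDensity (fun x => ENNReal.ofReal (f x)) with hμ
  have hfinμ : IsFiniteMeasure μ := by
    constructor
    rw [hμ, withDensity_apply _ MeasurableSet.univ, Measure.restrict_univ]
    exact hfint.lintegral_lt_top
  have haeΩ : ∀ᵐ x ∂μ, x ∈ Ω :=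
    Filter.Eventually.filter_mono ((withDensity_absolutelyContinuous _ _).ae_le)
      (ae_restrict_mem hΩm)
  have hSmeas : AEMeasurable S μ :=
    (hS.continuousOn.aemeasurable hΩm).mono_ac (withDensity_absolutelyContinuous _ _)
  have hgradcont : ContinuousOn (fun x => gradient u x) Ω := by
    have h1 : ContinuousOn (fderiv ℝ u) Ω :=
      hu.continuousOn_fderiv_of_isOpen hΩ (by norm_num)
    exact (InnerProductSpace.toDual ℝ
      (EuclideanSpace ℝ (Fin n))).symm.continuous.comp_continuousOn h1
  have hTmeas : AEMeasurable T μ := by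
    have h2 : AEMeasurable (fun x => gradient u x) μ :=
      (hgradcont.aemeasurable hΩm).mono_ac (withDensity_absolutelyContinuous _ _)
    exact h2.congr (haeΩ.mono fun x hx => (hT x hx).symm)
  -- transfer of integrals through the pushforward
  have htrans : ∀ h : EuclideanSpace ℝ (Fin n) → ℝ, Continuous h →
      ∫ x, h (S x) ∂μ = ∫ x, h (T x) ∂μ := by
    intro h hc
    have a1 := integral_map hSmeas (hc.aestronglyMeasurable
      (μ := Measure.map S μ))
    have a2 := integral_map hTmeas (hc.aestronglyMeasurable
      (μ := Measure.map T μ))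
    rw [hSpush] at a1
    rw [hTpush] at a2
    rw [← a1, ← a2]
  -- rewriting the weighted integrals as integrals against μ
  have hfnn : AEMeasurable (fun x => Real.toNNReal (f x)) (volume.restrict Ω) :=
    measurable_real_toNNReal.comp_aemeasurable hfint.aemeasurable
  have hdens : μ = (volume.restrict Ω).withDensity
      (fun x => ((Real.toNNReal (f x) : NNReal) : ENNReal)) := by
    rw [hμ]
    rfl
  have hform : ∀ φ : EuclideanSpace ℝ (Fin n) → ℝ,
      ∫ x in Ω, φ x * f x = ∫ x, φ x ∂μ := by
    intro φ
    rw [hdens, integral_withDensity_eq_integral_smul₀ hfnn φ]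
    refine integral_congr_ae ?_
    filter_upwards [ae_restrict_mem hΩm] with x hx
    rw [NNReal.smul_def, Real.coe_toNNReal _ (hfpos x hx).le, smul_eq_mul, mul_comm]
  have hLHS : ∫ x in Ω, ‖x - T x‖ ^ 2 / 2 * f x = ∫ x, ‖x - T x‖ ^ 2 / 2 ∂μ :=
    hform _
  have hRHS : ∫ x in Ω, ‖x - S x‖ ^ 2 / 2 * f x = ∫ x, ‖x - S x‖ ^ 2 / 2 ∂μ :=
    hform _
  rw [hLHS, hRHS]
  -- integrability of all the pieces
  have hintb : ∀ (φ : EuclideanSpace ℝ (Fin n) → ℝ), AEMeasurable φ μ →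
      ∀ (C : ℝ), (∀ x ∈ Ω, ‖φ x‖ ≤ C) → Integrable φ μ := by
    intro φ hφ C hC
    exact Integrable.mono' (integrable_const C) hφ.aestronglyMeasurable
      (haeΩ.mono fun x hx => hC x hx)
  have hqcont : Continuous (fun v : EuclideanSpace ℝ (Fin n) => ‖v‖ ^ 2 / 2) :=
    (continuous_norm.pow 2).div_const 2
  have i_cT : Integrable (fun x => ‖x - T x‖ ^ 2 / 2) μ := by
    refine hintb _ (hqcont.measurable.comp_aemeasurable (aemeasurable_id.sub hTmeas)) ((RΩ + RΩs) ^ 2 / 2) ?_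
    intro x hx
    rw [Real.norm_eq_abs, abs_of_nonneg (by positivity)]
    have h1 := norm_sub_le x (T x)
    have h2 := hnx x hx
    have h3 := hny _ (hTmap hx)
    nlinarith [norm_nonneg (x - T x), norm_nonneg x, norm_nonneg (T x)]
  have i_cS : Integrable (fun x => ‖x - S x‖ ^ 2 / 2) μ := by
    refine hintb _ (hqcont.measurable.comp_aemeasurable (aemeasurable_id.sub hSmeas)) ((RΩ + RΩs) ^ 2 / 2) ?_
    intro x hx
    rw [Real.norm_eq_abs, abs_of_nonneg (by positivity)]
    have h1 := norm_sub_le x (S x)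
    have h2 := hnx x hx
    have h3 := hny _ (hSmap hx)
    nlinarith [norm_nonneg (x - S x), norm_nonneg x, norm_nonneg (S x)]
  have i_qS : Integrable (fun x => ‖S x‖ ^ 2 / 2) μ := by
    refine hintb _ (hqcont.measurable.comp_aemeasurable hSmeas) (RΩs ^ 2 / 2) ?_
    intro x hx
    rw [Real.norm_eq_abs, abs_of_nonneg (by positivity)]
    have h3 := hny _ (hSmap hx)
    nlinarith [norm_nonneg (S x)]
  have i_qT : Integrable (fun x => ‖T x‖ ^ 2 / 2) μ := by
    refine hintb _ (hqcont.measurable.comp_aemeasurable hTmeas) (RΩs ^ 2 / 2) ?_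
    intro x hx
    rw [Real.norm_eq_abs, abs_of_nonneg (by positivity)]
    have h3 := hny _ (hTmap hx)
    nlinarith [norm_nonneg (T x)]
  have i_US : Integrable (fun x => U (S x)) μ := by
    refine hintb _ (hUcont.measurable.comp_aemeasurable hSmeas) (|U 0| + RΩ * RΩs) ?_
    intro x hx
    exact hUb _ (hny _ (hSmap hx))
  have i_UT : Integrable (fun x => U (T x)) μ := by
    refine hintb _ (hUcont.measurable.comp_aemeasurable hTmeas) (|U 0| + RΩ * RΩs) ?_
    intro x hx
    exact hUb _ (hny _ (hTmap hx))
  -- pushforward equalities for the two test functions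
  have h1 : ∫ x, ‖S x‖ ^ 2 / 2 ∂μ = ∫ x, ‖T x‖ ^ 2 / 2 ∂μ :=
    htrans (fun y => ‖y‖ ^ 2 / 2) hqcont
  have h2 : ∫ x, U (S x) ∂μ = ∫ x, U (T x) ∂μ := htrans U hUcont
  -- pointwise key inequality
  have hptwise : ∀ᵐ x ∂μ,
      ‖x - T x‖ ^ 2 / 2 +
        (‖S x‖ ^ 2 / 2 + U (T x) - (‖T x‖ ^ 2 / 2 + U (S x))) ≤
      ‖x - S x‖ ^ 2 / 2 := by
    filter_upwards [haeΩ] with x hx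
    have a := hUle x hx (S x)
    have b := hUT x hx
    have e1 := norm_sub_sq_real x (T x)
    have e2 := norm_sub_sq_real x (S x)
    linarith
  have i_midA : Integrable (fun x => ‖S x‖ ^ 2 / 2 + U (T x)) μ := i_qS.add i_UT
  have i_midB : Integrable (fun x => ‖T x‖ ^ 2 / 2 + U (S x)) μ := i_qT.add i_US
  have i_mid : Integrable
      (fun x => ‖S x‖ ^ 2 / 2 + U (T x) - (‖T x‖ ^ 2 / 2 + U (S x))) μ :=
    i_midA.sub i_midB
  have hmono : ∫ x, (‖x - T x‖ ^ 2 / 2 +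
        (‖S x‖ ^ 2 / 2 + U (T x) - (‖T x‖ ^ 2 / 2 + U (S x)))) ∂μ ≤
      ∫ x, ‖x - S x‖ ^ 2 / 2 ∂μ :=
    integral_mono_ae (i_cT.add i_mid) i_cS hptwise
  have s1 : ∫ x, (‖x - T x‖ ^ 2 / 2 +
        (‖S x‖ ^ 2 / 2 + U (T x) - (‖T x‖ ^ 2 / 2 + U (S x)))) ∂μ =
      (∫ x, ‖x - T x‖ ^ 2 / 2 ∂μ) +
        ∫ x, (‖S x‖ ^ 2 / 2 + U (T x) - (‖T x‖ ^ 2 / 2 + U (S x))) ∂μ :=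
    integral_add i_cT i_mid
  have s2 : ∫ x, (‖S x‖ ^ 2 / 2 + U (T x) - (‖T x‖ ^ 2 / 2 + U (S x))) ∂μ =
      (∫ x, (‖S x‖ ^ 2 / 2 + U (T x)) ∂μ) - ∫ x, (‖T x‖ ^ 2 / 2 + U (S x)) ∂μ :=
    integral_sub i_midA i_midB
  have s3 : ∫ x, (‖S x‖ ^ 2 / 2 + U (T x)) ∂μ =
      (∫ x, ‖S x‖ ^ 2 / 2 ∂μ) + ∫ x, U (T x) ∂μ := integral_add i_qS i_UT
  have s4 : ∫ x, (‖T x‖ ^ 2 / 2 + U (S x)) ∂μ =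
      (∫ x, ‖T x‖ ^ 2 / 2 ∂μ) + ∫ x, U (S x) ∂μ := integral_add i_qT i_US
  linarith
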